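/- arXiv:1606.05889 — 2 statements merged into one kernel-verified Lean document; each statement's English description precedes it below -/
import Mathlib

section
/- Let 𝒢 be a partition of {1,…,n} defining group k-sparse sets, let x, h ∈ ℝⁿ, and suppose ‖x + h‖₁ ≤ ‖x‖₁. Let Λ₀ be a group k-sparse set achieving min_{Λ ∈ GkS} ‖h_{Λ^c}‖₁. Then ‖h_{Λ₀^c}‖₁ − ‖h_{Λ₀}‖₁ ≤ 2·σ_{k,𝒢}(x,‖·‖₁). -/
open Finset

noncomputable section

namespace CS

/-- The ℓ1 norm of a vector. -/
def l1 {d : ℕ} (x : Fin d → ℝ) : ℝ := ∑ i, |x i|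

/-- The ℓ2 (Euclidean) norm of a vector. -/
def l2 {d : ℕ} (x : Fin d → ℝ) : ℝ := Real.sqrt (∑ i, (x i) ^ 2)

/-- The ℓp norm of a vector (for real p ≥ 1). -/
def lpnorm {d : ℕ} (p : ℝ) (x : Fin d → ℝ) : ℝ := (∑ i, |x i| ^ p) ^ (1 / p)

/-- `restrict Λ x` agrees with `x` on `Λ` and is zero elsewhere. -/
def restrict {d : ℕ} (Λ : Finset (Fin d)) (x : Fin d → ℝ) : Fin d → ℝ :=
  fun i => if i ∈ Λ then x i else 0

/-- The support of a vector. -/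
def supp {d : ℕ} (x : Fin d → ℝ) : Finset (Fin d) :=
  Finset.univ.filter fun i => x i ≠ 0

/-- `G : Fin g → Finset (Fin n)` is a partition of `{1,…,n}` into `g` (nonempty,
pairwise disjoint) groups covering everything. -/
def IsPartition {n g : ℕ} (G : Fin g → Finset (Fin n)) : Prop :=
  (∀ j, (G j).Nonempty) ∧
  (∀ j j', j ≠ j' → Disjoint (G j) (G j')) ∧
  Finset.univ.biUnion G = Finset.univ

/-- A subset `Λ ⊆ {1,…,n}` is group `k`-sparse: it is a union of groups and has
cardinality at most `k`. -/
def GroupSparseSet {n g : ℕ} (G : Fin g → Finset (Fin n)) (k : ℕ)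
    (Λ : Finset (Fin n)) : Prop :=
  (∃ S : Finset (Fin g), Λ = S.biUnion G) ∧ Λ.card ≤ k

/-- A vector is group `l`-sparse: its support is contained in a union of groups
of total cardinality at most `l`. -/
def GroupSparseVec {n g : ℕ} (G : Fin g → Finset (Fin n)) (l : ℕ)
    (z : Fin n → ℝ) : Prop :=
  ∃ S : Finset (Fin g), supp z ⊆ S.biUnion G ∧ (S.biUnion G).card ≤ l

/-- The group restricted isometry property of order `l` with constant `δ`. -/
def GRIP {m n g : ℕ} (A : Matrix (Fin m) (Fin n) ℝ) (G : Fin g → Finset (Fin n))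
    (l : ℕ) (δ : ℝ) : Prop :=
  ∀ z : Fin n → ℝ, GroupSparseVec G l z →
    (1 - δ) * (l2 z) ^ 2 ≤ (l2 (A.mulVec z)) ^ 2 ∧
    (l2 (A.mulVec z)) ^ 2 ≤ (1 + δ) * (l2 z) ^ 2

/-- The ℓ2 group robust null space property of order `k`
with constants `ρ`, `τ`. -/
def GRNSP {m n g : ℕ} (A : Matrix (Fin m) (Fin n) ℝ) (G : Fin g → Finset (Fin n))
    (k : ℕ) (ρ τ : ℝ) : Prop :=
  ∀ (h : Fin n → ℝ) (Λ : Finset (Fin n)), GroupSparseSet G k Λ →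
    l2 (restrict Λ h) ≤
      ρ / Real.sqrt k * l1 (restrict Λᶜ h) + τ / Real.sqrt k * l2 (A.mulVec h)

/-- The group `k`-sparsity index of `x` with respect to the ℓ1 norm:
`σ_{k,𝒢}(x, ‖·‖₁) = min_{Λ ∈ GkS} ‖x − x_Λ‖₁ = min_{Λ ∈ GkS} ‖x_{Λᶜ}‖₁`. -/
def gIndex {n g : ℕ} (G : Fin g → Finset (Fin n)) (k : ℕ) (x : Fin n → ℝ) : ℝ :=
  sInf {r | ∃ Λ : Finset (Fin n), GroupSparseSet G k Λ ∧ r = l1 (restrict Λᶜ x)}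

/-- The (conventional) restricted isometry property of order `l`
with constant `δ`. -/
def RIP {m n : ℕ} (A : Matrix (Fin m) (Fin n) ℝ) (l : ℕ) (δ : ℝ) : Prop :=
  ∀ u : Fin n → ℝ, (supp u).card ≤ l →
    (1 - δ) * (l2 u) ^ 2 ≤ (l2 (A.mulVec u)) ^ 2 ∧
    (l2 (A.mulVec u)) ^ 2 ≤ (1 + δ) * (l2 u) ^ 2

/-- The (conventional) `k`-sparsity index
`σ_k(x, ‖·‖₁) = min_{z k-sparse} ‖x − z‖₁`. -/
def sIndex {n : ℕ} (k : ℕ) (x : Fin n → ℝ) : ℝ :=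
  sInf {r | ∃ z : Fin n → ℝ, (supp z).card ≤ k ∧ r = l1 (x - z)}

/-- The group support of `v`: the set of groups on which `v` is nonzero. -/
def Gsupp {n g : ℕ} (G : Fin g → Finset (Fin n)) (v : Fin n → ℝ) :
    Finset (Fin g) :=
  Finset.univ.filter fun j => restrict (G j) v ≠ 0

lemma l1_restrict_add_compl {d : ℕ} (Λ : Finset (Fin d)) (v : Fin d → ℝ) :
    l1 (restrict Λ v) + l1 (restrict Λᶜ v) = l1 v := by
  simp only [l1, restrict]
  rw [← Finset.sum_add_distrib]
  refine Finset.sum_congr rfl fun i _ => ?_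
  by_cases hi : i ∈ Λ <;> simp [hi]

lemma l1_add_le {d : ℕ} (a b : Fin d → ℝ) : l1 (a + b) ≤ l1 a + l1 b := by
  simp only [l1, ← Finset.sum_add_distrib]
  exact Finset.sum_le_sum fun i _ => abs_add_le _ _

lemma restrict_add {d : ℕ} (Λ : Finset (Fin d)) (a b : Fin d → ℝ) :
    restrict Λ (a + b) = restrict Λ a + restrict Λ b := by
  funext i; simp only [restrict, Pi.add_apply]; split <;> simp

lemma l1_nonneg {d : ℕ} (v : Fin d → ℝ) : 0 ≤ l1 v :=
  Finset.sum_nonneg fun i _ => abs_nonneg _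

/-- **cone constraint \eqref{eq:342}.** If `‖x + h‖₁ ≤ ‖x‖₁` and
`Λ₀` is a group `k`-sparse set minimizing `‖h_{Λᶜ}‖₁`, then
`‖h_{Λ₀ᶜ}‖₁ − ‖h_{Λ₀}‖₁ ≤ 2σ_{k,𝒢}(x)`. -/
theorem cone_inequality {n g k : ℕ}
    (G : Fin g → Finset (Fin n)) (hG : IsPartition G)
    (hGk : ∀ j, (G j).card ≤ k)
    (x h : Fin n → ℝ) (hxh : l1 (x + h) ≤ l1 x)
    (Λ₀ : Finset (Fin n)) (hΛ₀ : GroupSparseSet G k Λ₀)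
    (hΛ₀min : ∀ Λ : Finset (Fin n), GroupSparseSet G k Λ →
      l1 (restrict Λ₀ᶜ h) ≤ l1 (restrict Λᶜ h)) :
    l1 (restrict Λ₀ᶜ h) - l1 (restrict Λ₀ h) ≤ 2 * gIndex G k x := by
  have key : ∀ Λ : Finset (Fin n), GroupSparseSet G k Λ →
      l1 (restrict Λ₀ᶜ h) - l1 (restrict Λ₀ h) ≤ 2 * l1 (restrict Λᶜ x) := by
    intro Λ hΛ
    have e1 := l1_restrict_add_compl Λ x
    have e2 := l1_restrict_add_compl Λ h
    have e3 := l1_restrict_add_compl Λ₀ h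
    have e4 := l1_restrict_add_compl Λ (x + h)
    -- ‖x_Λ‖ ≤ ‖(x+h)_Λ‖ + ‖h_Λ‖
    have t1 : l1 (restrict Λ x) ≤ l1 (restrict Λ (x + h)) + l1 (restrict Λ h) := by
      have : restrict Λ x = restrict Λ (x + h) + restrict Λ (-h) := by
        rw [← restrict_add]; congr 1; funext i; simp
      rw [this]
      have := l1_add_le (restrict Λ (x + h)) (restrict Λ (-h))
      have hneg : l1 (restrict Λ (-h)) = l1 (restrict Λ h) := by
        simp [l1, restrict, apply_ite abs]
      linarith
    -- ‖h_{Λᶜ}‖ ≤ ‖(x+h)_{Λᶜ}‖ + ‖x_{Λᶜ}‖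
    have t2 : l1 (restrict Λᶜ h) ≤ l1 (restrict Λᶜ (x + h)) + l1 (restrict Λᶜ x) := by
      have : restrict Λᶜ h = restrict Λᶜ (x + h) + restrict Λᶜ (-x) := by
        rw [← restrict_add]; congr 1; funext i; simp
      rw [this]
      have := l1_add_le (restrict Λᶜ (x + h)) (restrict Λᶜ (-x))
      have hneg : l1 (restrict Λᶜ (-x)) = l1 (restrict Λᶜ x) := by
        simp [l1, restrict, apply_ite abs]
      linarith
    have hmin := hΛ₀min Λ hΛ
    linarith
  have hne : {r | ∃ Λ : Finset (Fin n), GroupSparseSet G k Λ ∧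
      r = l1 (restrict Λᶜ x)}.Nonempty := ⟨_, Λ₀, hΛ₀, rfl⟩
  have hle : (l1 (restrict Λ₀ᶜ h) - l1 (restrict Λ₀ h)) / 2 ≤ gIndex G k x := by
    apply le_csInf hne
    rintro r ⟨Λ, hΛ, rfl⟩
    linarith [key Λ hΛ]
  linarith

end CS
end
end

section
/- Let 𝒢 = {G_1, …, G_g} be a partition of {1,…,n}, let α > 0 and let s be a positive integer. Let v ∈ ℝⁿ satisfy ‖v_{G_j}‖₁ ≤ α for all j, ‖v‖₁ ≤ sα, and suppose the number r of groups G_j with v_{G_j} ≠ 0 satisfies r ≥ s + 1. Then there exist an integer M ≥ 1, vectors w_1, …, w_M ∈ ℝⁿ, and positive reals λ_1, …, λ_M summing to 1, such that for each t: supp(w_t) ⊆ supp(v); ‖w_t‖₁ = ‖v‖₁; ‖(w_t)_{G_j}‖₁ ≤ α for all j; the number of groups on which w_t is nonzero is at most r − 1; and v = Σ_{t=1}^M λ_t w_t. -/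
open Finset

noncomputable section

namespace CS

/-!
Write `a j = ‖v_{G_j}‖₁` and `R = Gsupp G v`. The hypotheses say that `0 < a j ≤ α` on `R` and
that the total slack `∑_{j ∈ R} (α - a j) = rα - ‖v‖₁` is at least `α`. For `i ∈ R`, let `w_i` be
`v` with its groups rescaled so that group `i` is emptied and its mass `a i` is spread over the
other groups in proportion to their slack `α - a j`. Since the slack outside `i` is at least
`a i`, no group of `w_i` exceeds `α`; the total mass is unchanged and `w_i` lives on `r - 1`
groups. As the `w_i` only rescale the groups of `v`, writing `v` as a convex combination of
them reduces to writing the mass profile `a` as a convex combination of their mass profiles.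
-/

open Function

section Redistribution

variable {ι : Type*}

structure IsRedistributable (R : Finset ι) (a : ι → ℝ) (α : ℝ) : Prop where
  pos : ∀ k ∈ R, 0 < a k
  le : ∀ k ∈ R, a k ≤ α
  sum_add_le : ∑ k ∈ R, a k + α ≤ #R * α

lemma IsRedistributable.exists_lt {R : Finset ι} {a : ι → ℝ} {α : ℝ}
    (h : IsRedistributable R a α) (hα : 0 < α) : ∃ k ∈ R, a k < α := by
  by_contra! hge
  have : #R * α ≤ ∑ k ∈ R, a k := by
    simpa [sum_const, nsmul_eq_mul] using sum_le_sum hge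
  linarith [h.sum_add_le]

variable [DecidableEq ι]

def outerSlack (R : Finset ι) (a : ι → ℝ) (α : ℝ) (i : ι) : ℝ :=
  ∑ k ∈ R.erase i, (α - a k)

def redistribute (R : Finset ι) (a : ι → ℝ) (α : ℝ) (i j : ι) : ℝ :=
  if j = i then 0 else a j + a i * (α - a j) / outerSlack R a α i

def slackWeight (R : Finset ι) (a : ι → ℝ) (α : ℝ) (i : ι) : ℝ :=
  (α - a i) * outerSlack R a α i / a i

-- Chosen so that `λ i * a i * (α - a j) / outerSlack i` is proportional to the expression
-- `(α - a i) * (α - a j)`, symmetric in `i` and `j`: this makes the profiles average to `a`.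
def redistributionWeight (R : Finset ι) (a : ι → ℝ) (α : ℝ) (i : ι) : ℝ :=
  slackWeight R a α i / ∑ k ∈ R, slackWeight R a α k

variable {R : Finset ι} {a : ι → ℝ} {α : ℝ} {i j : ι}

lemma outerSlack_eq (hi : i ∈ R) :
    outerSlack R a α i = #R * α - ∑ k ∈ R, a k - (α - a i) := by
  rw [outerSlack, sum_erase_eq_sub hi, sum_sub_distrib, sum_const, nsmul_eq_mul]

lemma redistribute_self : redistribute R a α i i = 0 := if_pos rfl

lemma redistribute_of_ne (h : j ≠ i) :
    redistribute R a α i j = a j + a i * (α - a j) / outerSlack R a α i := if_neg h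

namespace IsRedistributable

variable (h : IsRedistributable R a α)
include h

lemma le_outerSlack (hi : i ∈ R) : a i ≤ outerSlack R a α i := by
  rw [outerSlack_eq hi]
  linarith [h.sum_add_le]

lemma outerSlack_pos (hi : i ∈ R) : 0 < outerSlack R a α i :=
  (h.pos i hi).trans_le (h.le_outerSlack hi)

lemma redistribute_nonneg (hi : i ∈ R) (hj : j ∈ R) : 0 ≤ redistribute R a α i j := by
  rcases eq_or_ne j i with rfl | hji
  · rw [redistribute_self]
  rw [redistribute_of_ne hji]
  have := sub_nonneg.2 (h.le j hj)
  have := h.outerSlack_pos hi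
  have := h.pos i hi
  have := h.pos j hj
  positivity

lemma redistribute_le (hi : i ∈ R) (hj : j ∈ R) : redistribute R a α i j ≤ α := by
  rcases eq_or_ne j i with rfl | hji
  · rw [redistribute_self]
    exact (h.pos j hj).le.trans (h.le j hj)
  rw [redistribute_of_ne hji]
  have : a i * (α - a j) / outerSlack R a α i ≤ α - a j := by
    rw [div_le_iff₀ (h.outerSlack_pos hi), mul_comm]
    exact mul_le_mul_of_nonneg_left (h.le_outerSlack hi) (sub_nonneg.2 (h.le j hj))
  linarith

lemma sum_redistribute (hi : i ∈ R) :
    ∑ j ∈ R, redistribute R a α i j = ∑ j ∈ R, a j := by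
  rw [← add_sum_erase R _ hi, redistribute_self, zero_add,
    sum_congr rfl fun j hj => redistribute_of_ne (ne_of_mem_erase hj), sum_add_distrib,
    ← sum_div, ← mul_sum, ← outerSlack, mul_div_cancel_right₀ _ (h.outerSlack_pos hi).ne',
    sum_erase_add R _ hi]

lemma slackWeight_nonneg (hi : i ∈ R) : 0 ≤ slackWeight R a α i :=
  div_nonneg (mul_nonneg (sub_nonneg.2 (h.le i hi)) (h.outerSlack_pos hi).le) (h.pos i hi).le

lemma sum_slackWeight_pos (hα : 0 < α) : 0 < ∑ k ∈ R, slackWeight R a α k := by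
  obtain ⟨k, hk, hlt⟩ := h.exists_lt hα
  exact sum_pos' (fun i hi => h.slackWeight_nonneg hi)
    ⟨k, hk, div_pos (mul_pos (sub_pos.2 hlt) (h.outerSlack_pos hk)) (h.pos k hk)⟩

lemma redistributionWeight_nonneg (hi : i ∈ R) : 0 ≤ redistributionWeight R a α i :=
  div_nonneg (h.slackWeight_nonneg hi) (sum_nonneg fun _ hk => h.slackWeight_nonneg hk)

lemma sum_redistributionWeight (hα : 0 < α) : ∑ i ∈ R, redistributionWeight R a α i = 1 := by
  simp only [redistributionWeight]
  rw [← sum_div, div_self (h.sum_slackWeight_pos hα).ne']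

lemma sum_redistributionWeight_mul_redistribute (hα : 0 < α) (hj : j ∈ R) :
    ∑ i ∈ R, redistributionWeight R a α i * redistribute R a α i j = a j := by
  set D := ∑ k ∈ R, slackWeight R a α k
  have hD := (h.sum_slackWeight_pos hα).ne'
  have hweight : ∀ i, redistributionWeight R a α i = (α - a i) * outerSlack R a α i / a i / D :=
    fun _ => rfl
  have hterm : ∀ i ∈ R.erase j, redistributionWeight R a α i * redistribute R a α i j
      = a j * redistributionWeight R a α i + (α - a i) * (α - a j) / D := by
    intro i hi
    have hiR := mem_of_mem_erase hi
    have := (h.pos i hiR).ne'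
    have := (h.outerSlack_pos hiR).ne'
    rw [redistribute_of_ne (ne_of_mem_erase hi).symm, hweight]
    field_simp
  have hself : a j * redistributionWeight R a α j = (α - a j) * outerSlack R a α j / D := by
    rw [hweight]
    field_simp [(h.pos j hj).ne']
  rw [← add_sum_erase R _ hj, redistribute_self, mul_zero, zero_add, sum_congr rfl hterm,
    sum_add_distrib, ← mul_sum, ← sum_div, ← sum_mul, ← outerSlack, sum_erase_eq_sub hj,
    h.sum_redistributionWeight hα, mul_sub, mul_one, hself]
  ring

end IsRedistributable

end Redistribution

section GroupRescaling

variable {d : ℕ}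

@[simp]
lemma l1_zero : l1 (0 : Fin d → ℝ) = 0 := by
  simp [l1]

lemma l1_pos {x : Fin d → ℝ} (hx : x ≠ 0) : 0 < l1 x := by
  obtain ⟨i, hi⟩ := Function.ne_iff.1 hx
  exact sum_pos' (fun _ _ => abs_nonneg _) ⟨i, mem_univ i, abs_pos.2 hi⟩

lemma l1_smul (c : ℝ) (x : Fin d → ℝ) : l1 (c • x) = |c| * l1 x := by
  simp [l1, abs_mul, mul_sum]

lemma l1_restrict (Λ : Finset (Fin d)) (x : Fin d → ℝ) :
    l1 (restrict Λ x) = ∑ i ∈ Λ, |x i| := by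
  rw [l1, ← sum_subset (subset_univ Λ) fun i _ hi => by simp [restrict, hi]]
  exact sum_congr rfl fun i hi => by simp [restrict, hi]

lemma restrict_smul (Λ : Finset (Fin d)) (c : ℝ) (x : Fin d → ℝ) :
    restrict Λ (c • x) = c • restrict Λ x := by
  ext i
  simp [restrict]

lemma restrict_sum {ι : Type*} (Λ : Finset (Fin d)) (s : Finset ι) (f : ι → Fin d → ℝ) :
    restrict Λ (∑ i ∈ s, f i) = ∑ i ∈ s, restrict Λ (f i) := by
  ext i
  by_cases hi : i ∈ Λ <;> simp [restrict, hi]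

lemma restrict_restrict (Λ Λ' : Finset (Fin d)) (x : Fin d → ℝ) :
    restrict Λ (restrict Λ' x) = restrict (Λ ∩ Λ') x := by
  ext i
  by_cases hi : i ∈ Λ <;> by_cases hi' : i ∈ Λ' <;> simp [restrict, hi, hi']

variable {n g : ℕ} {G : Fin g → Finset (Fin n)} {v : Fin n → ℝ} {j k : Fin g}

lemma restrict_eq_zero_of_not_mem_Gsupp (hj : j ∉ Gsupp G v) : restrict (G j) v = 0 := by
  simpa [Gsupp] using hj

lemma l1_restrict_pos_of_mem_Gsupp (hj : j ∈ Gsupp G v) : 0 < l1 (restrict (G j) v) :=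
  l1_pos (by simpa [Gsupp] using hj)

lemma sum_restrict_Gsupp (hdisj : Pairwise (Disjoint on G)) (hcover : univ.biUnion G = univ)
    (v : Fin n → ℝ) : ∑ j ∈ Gsupp G v, restrict (G j) v = v := by
  rw [sum_subset (subset_univ _) fun j _ hj => restrict_eq_zero_of_not_mem_Gsupp hj]
  ext x
  rw [Finset.sum_apply]
  obtain ⟨j₀, -, hx⟩ := mem_biUnion.1 (hcover ▸ mem_univ x)
  simp only [restrict]
  rw [sum_eq_single j₀ (fun j _ hj => if_neg fun hxj =>
    disjoint_left.1 (hdisj hj) hxj hx) (by simp)]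
  exact if_pos hx

lemma l1_eq_sum_l1_restrict (hdisj : Pairwise (Disjoint on G)) (hcover : univ.biUnion G = univ)
    (v : Fin n → ℝ) : l1 v = ∑ j, l1 (restrict (G j) v) := by
  simp only [l1_restrict]
  rw [l1, ← hcover, sum_biUnion (hdisj.set_pairwise _)]

lemma l1_eq_sum_Gsupp (hdisj : Pairwise (Disjoint on G)) (hcover : univ.biUnion G = univ)
    (v : Fin n → ℝ) : l1 v = ∑ j ∈ Gsupp G v, l1 (restrict (G j) v) := by
  rw [l1_eq_sum_l1_restrict hdisj hcover, ← sum_subset (subset_univ _) fun j _ hj => by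
    rw [restrict_eq_zero_of_not_mem_Gsupp hj, l1_zero]]

-- `v` with each of its groups `G j` rescaled to ℓ1 mass `|b j|`.
def rescaleGroups (G : Fin g → Finset (Fin n)) (v : Fin n → ℝ) (b : Fin g → ℝ) : Fin n → ℝ :=
  ∑ j ∈ Gsupp G v, (b j / l1 (restrict (G j) v)) • restrict (G j) v

variable {b : Fin g → ℝ}

lemma restrict_rescaleGroups (hdisj : Pairwise (Disjoint on G)) :
    restrict (G k) (rescaleGroups G v b) = (b k / l1 (restrict (G k) v)) • restrict (G k) v := by
  have hgroup : ∀ j, restrict (G k) (restrict (G j) v) =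
      if j = k then restrict (G k) v else 0 := by
    intro j
    split_ifs with hjk
    · rw [hjk, restrict_restrict, inter_self]
    · rw [restrict_restrict, disjoint_iff_inter_eq_empty.1 (hdisj (Ne.symm hjk))]
      ext i
      simp [restrict]
  simp only [rescaleGroups, restrict_sum, restrict_smul, hgroup, smul_ite, smul_zero]
  rw [sum_ite_eq']
  split_ifs with hk
  · rfl
  · rw [restrict_eq_zero_of_not_mem_Gsupp hk, smul_zero]

lemma l1_restrict_rescaleGroups (hdisj : Pairwise (Disjoint on G)) (hk : k ∈ Gsupp G v) :
    l1 (restrict (G k) (rescaleGroups G v b)) = |b k| := by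
  rw [restrict_rescaleGroups hdisj, l1_smul, abs_div,
    abs_of_pos (l1_restrict_pos_of_mem_Gsupp hk),
    div_mul_cancel₀ _ (l1_restrict_pos_of_mem_Gsupp hk).ne']

lemma restrict_rescaleGroups_of_not_mem (hdisj : Pairwise (Disjoint on G)) (hk : k ∉ Gsupp G v) :
    restrict (G k) (rescaleGroups G v b) = 0 := by
  rw [restrict_rescaleGroups hdisj, restrict_eq_zero_of_not_mem_Gsupp hk, smul_zero]

lemma l1_restrict_rescaleGroups_le {α : ℝ} (hdisj : Pairwise (Disjoint on G)) (hα : 0 ≤ α)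
    (hb : ∀ k ∈ Gsupp G v, |b k| ≤ α) (k : Fin g) :
    l1 (restrict (G k) (rescaleGroups G v b)) ≤ α := by
  by_cases hk : k ∈ Gsupp G v
  · exact (l1_restrict_rescaleGroups hdisj hk).trans_le (hb k hk)
  · rwa [restrict_rescaleGroups_of_not_mem hdisj hk, l1_zero]

lemma l1_rescaleGroups (hdisj : Pairwise (Disjoint on G)) (hcover : univ.biUnion G = univ) :
    l1 (rescaleGroups G v b) = ∑ k ∈ Gsupp G v, |b k| := by
  rw [l1_eq_sum_l1_restrict hdisj hcover, ← sum_subset (subset_univ (Gsupp G v)) fun k _ hk => by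
    rw [restrict_rescaleGroups_of_not_mem hdisj hk, l1_zero]]
  exact sum_congr rfl fun k hk => l1_restrict_rescaleGroups hdisj hk

lemma supp_rescaleGroups_subset : supp (rescaleGroups G v b) ⊆ supp v := by
  intro x
  simp only [supp, mem_filter, mem_univ, true_and]
  contrapose!
  intro hx
  simp [rescaleGroups, Finset.sum_apply, restrict, hx]

lemma card_Gsupp_rescaleGroups_le (hdisj : Pairwise (Disjoint on G)) {i : Fin g}
    (hi : i ∈ Gsupp G v) (hbi : b i = 0) :
    #(Gsupp G (rescaleGroups G v b)) ≤ #(Gsupp G v) - 1 := by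
  rw [← card_erase_of_mem hi]
  refine card_le_card fun k hk => ?_
  have hk' : restrict (G k) (rescaleGroups G v b) ≠ 0 := by simpa [Gsupp] using hk
  rw [restrict_rescaleGroups hdisj] at hk'
  refine mem_erase.2 ⟨fun hki => ?_, by_contra fun hkv => ?_⟩
  · simp [hki, hbi] at hk'
  · simp [restrict_eq_zero_of_not_mem_Gsupp hkv] at hk'

lemma sum_smul_rescaleGroups {ι : Type*} (s : Finset ι) (c : ι → ℝ) (b : ι → Fin g → ℝ) :
    ∑ i ∈ s, c i • rescaleGroups G v (b i) = rescaleGroups G v (∑ i ∈ s, c i • b i) := by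
  simp only [rescaleGroups, smul_sum, smul_smul]
  rw [sum_comm]
  refine sum_congr rfl fun j _ => ?_
  rw [← sum_smul, Finset.sum_apply, sum_div]
  simp [mul_div_assoc]

lemma rescaleGroups_eq_self (hdisj : Pairwise (Disjoint on G)) (hcover : univ.biUnion G = univ)
    (hb : ∀ j ∈ Gsupp G v, b j = l1 (restrict (G j) v)) : rescaleGroups G v b = v := by
  rw [rescaleGroups, sum_congr rfl fun j hj => by
    rw [hb j hj, div_self (l1_restrict_pos_of_mem_Gsupp hj).ne', one_smul]]
  exact sum_restrict_Gsupp hdisj hcover v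

end GroupRescaling

lemma exists_fin_convexComb_pos {ι E : Type*} [AddCommMonoid E] [Module ℝ E] (s : Finset ι)
    (lam : ι → ℝ) (w : ι → E) (hlam : ∀ i ∈ s, 0 ≤ lam i) (hsum : ∑ i ∈ s, lam i = 1) :
    ∃ M, 0 < M ∧ ∃ e : Fin M → ι, (∀ t, e t ∈ s) ∧ (∀ t, 0 < lam (e t)) ∧
      ∑ t, lam (e t) = 1 ∧ ∑ i ∈ s, lam i • w i = ∑ t, lam (e t) • w (e t) := by
  classical
  set I := s.filter fun i => 0 < lam i
  have hpos : ∀ i ∈ s, lam i ≠ 0 → 0 < lam i := fun i hi hne => (hlam i hi).lt_of_ne' hne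
  have hsumI : ∑ i ∈ I, lam i = 1 := by rwa [sum_filter_of_ne hpos]
  have hcombI : ∑ i ∈ I, lam i • w i = ∑ i ∈ s, lam i • w i :=
    sum_filter_of_ne fun i hi hne => hpos i hi (left_ne_zero_of_smul hne)
  refine ⟨#I, card_pos.2 (nonempty_of_sum_ne_zero (hsumI ▸ one_ne_zero)),
    fun t => I.equivFin.symm t, fun t => (mem_filter.1 (I.equivFin.symm t).2).1,
    fun t => (mem_filter.1 (I.equivFin.symm t).2).2, ?_, ?_⟩
  · exact ((I.equivFin.symm.sum_comp fun i : I => lam i).trans (sum_coe_sort I lam)).trans hsumI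
  · exact (hcombI.symm.trans (sum_coe_sort I _).symm).trans
      (I.equivFin.symm.sum_comp fun i : I => lam i • w i).symm

theorem polytope_inductive_step_general {n g : ℕ}
    (G : Fin g → Finset (Fin n)) (hG : IsPartition G)
    (α : ℝ) (hα : 0 < α) (s : ℕ)
    (v : Fin n → ℝ)
    (hvG : ∀ j, l1 (restrict (G j) v) ≤ α)
    (hv : l1 v ≤ (s : ℝ) * α)
    (r : ℕ) (hr : r = (Gsupp G v).card) (hrs : s + 1 ≤ r) :
    ∃ (M : ℕ), 0 < M ∧
      ∃ (w : Fin M → (Fin n → ℝ)) (lam : Fin M → ℝ),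
        (∀ i, 0 < lam i) ∧
        (∑ i, lam i = 1) ∧
        (∀ i, supp (w i) ⊆ supp v) ∧
        (∀ i, l1 (w i) = l1 v) ∧
        (∀ i j, l1 (restrict (G j) (w i)) ≤ α) ∧
        (∀ i, (Gsupp G (w i)).card ≤ r - 1) ∧
        v = ∑ i, lam i • w i := by
  obtain ⟨-, hdisj, hcover⟩ := hG
  set R := Gsupp G v
  set a : Fin g → ℝ := fun j => l1 (restrict (G j) v)
  have hmass : ∑ j ∈ R, a j + α ≤ #R * α := by
    have : (s : ℝ) + 1 ≤ #R := by exact_mod_cast hr ▸ hrs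
    rw [← l1_eq_sum_Gsupp hdisj hcover]
    nlinarith
  have h : IsRedistributable R a α :=
    ⟨fun _ => l1_restrict_pos_of_mem_Gsupp, fun j _ => hvG j, hmass⟩
  set b := redistribute R a α
  have hb_abs : ∀ i ∈ R, ∀ k ∈ R, |b i k| = b i k :=
    fun i hi k hk => abs_of_nonneg (h.redistribute_nonneg hi hk)
  have hw_mass : ∀ i ∈ R, l1 (rescaleGroups G v (b i)) = l1 v := fun i hi => by
    rw [l1_rescaleGroups hdisj hcover, l1_eq_sum_Gsupp hdisj hcover, ← h.sum_redistribute hi]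
    exact sum_congr rfl (hb_abs i hi)
  have hw_group : ∀ i ∈ R, ∀ k, l1 (restrict (G k) (rescaleGroups G v (b i))) ≤ α :=
    fun i hi => l1_restrict_rescaleGroups_le hdisj hα.le fun k hk =>
      (hb_abs i hi k hk).trans_le (h.redistribute_le hi hk)
  have hv_avg : v = rescaleGroups G v (∑ i ∈ R, redistributionWeight R a α i • b i) := by
    refine (rescaleGroups_eq_self hdisj hcover fun j hj => ?_).symm
    simpa [Finset.sum_apply] using h.sum_redistributionWeight_mul_redistribute hα hj
  obtain ⟨M, hM, e, heR, hpos, hsum, hcomb⟩ := exists_fin_convexComb_pos R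
    (redistributionWeight R a α) (fun i => rescaleGroups G v (b i))
    (fun _ => h.redistributionWeight_nonneg) (h.sum_redistributionWeight hα)
  refine ⟨M, hM, fun t => rescaleGroups G v (b (e t)), _, hpos, hsum,
    fun _ => supp_rescaleGroups_subset, fun t => hw_mass _ (heR t), fun t => hw_group _ (heR t),
    fun t => hr ▸ card_Gsupp_rescaleGroups_le hdisj (heR t) redistribute_self, ?_⟩
  rw [← hcomb, sum_smul_rescaleGroups, ← hv_avg]

/-- **inductive step of the polytope decomposition lemma.**
If `‖v_{G_j}‖₁ ≤ α` for all `j`, `‖v‖₁ ≤ sα`, and `v` is supported on `r ≥ s + 1`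
groups, then `v` is a convex combination of vectors `w_t` each supported on at most
`r − 1` groups, with `supp(w_t) ⊆ supp(v)`, `‖w_t‖₁ = ‖v‖₁`, `‖(w_t)_{G_j}‖₁ ≤ α`. -/
theorem polytope_inductive_step {n g : ℕ}
    (G : Fin g → Finset (Fin n)) (hG : IsPartition G)
    (α : ℝ) (hα : 0 < α) (s : ℕ) (hs : 0 < s)
    (v : Fin n → ℝ)
    (hvG : ∀ j, l1 (restrict (G j) v) ≤ α)
    (hv : l1 v ≤ (s : ℝ) * α)
    (r : ℕ) (hr : r = (Gsupp G v).card) (hrs : s + 1 ≤ r) :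
    ∃ (M : ℕ), 0 < M ∧
      ∃ (w : Fin M → (Fin n → ℝ)) (lam : Fin M → ℝ),
        (∀ i, 0 < lam i) ∧
        (∑ i, lam i = 1) ∧
        (∀ i, supp (w i) ⊆ supp v) ∧
        (∀ i, l1 (w i) = l1 v) ∧
        (∀ i j, l1 (restrict (G j) (w i)) ≤ α) ∧
        (∀ i, (Gsupp G (w i)).card ≤ r - 1) ∧
        v = ∑ i, lam i • w i :=
  polytope_inductive_step_general G hG α hα s v hvG hv r hr hrs

end CS
end
end
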